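/- Let (S,C,R) be a binary double-full reaction network, and let {x_n} be a D-type tier sequence. For any reaction y → y' ∈ R with source y in tier 1, the mass-action intensity λ_{y→y'}(x_n) is strictly positive for all sufficiently large n. -/

import Mathlib

/-!
Write `m_k = max(x_k, 1)` and `B = max_k m_k`. Tier 1 membership of `y`, compared with the
double complexes `2e_k`, gives `m_k² = O((x∨1)^y)` for every `k`, hence `B² ≤ c (x∨1)^y`.
A binary `y` with `y_i ≥ 1` is `e_i + z` with `‖z‖₁ ≤ 1`, so `(x∨1)^y ≤ m_i B`. Together,
`B ≤ c m_i`; since `B ≥ m_j → ∞` for the diverging coordinate `j`, every coordinate in the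
support of `y` diverges, so `x_n ≥ y` eventually and every descending factorial is positive.
-/

open Filter Topology Finset Real
open scoped ENNReal

/-- The monomial `(x ∨ 1)^y = ∏_i max(x_i,1)^{y_i}` for `x, y ∈ Z_{≥0}^d`. -/
noncomputable def monN {d : ℕ} (x : Fin d → ℕ) (y : Fin d → ℕ) : ℝ :=
  ∏ i, ((max (x i) 1 : ℕ) : ℝ) ^ (y i)

/-- `y` belongs to tier 1 along the sequence `x` relative to the complex set `C`. -/
def Tier1 {d : ℕ} (C : Finset (Fin d → ℕ)) (x : ℕ → Fin d → ℕ) (y : Fin d → ℕ) : Prop :=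
  ∀ y' ∈ C, ∃ L : ℝ≥0∞, 0 < L ∧
    Tendsto (fun n => ENNReal.ofReal (monN (x n) y / monN (x n) y')) atTop (𝓝 L)

open Asymptotics

section Monomial

variable {d : ℕ} (x : Fin d → ℕ)

lemma one_le_max_one_cast (a : ℕ) : (1 : ℝ) ≤ ((max a 1 : ℕ) : ℝ) :=
  Nat.one_le_cast.2 (le_max_right a 1)

lemma monN_pos (y : Fin d → ℕ) : 0 < monN x y :=
  prod_pos fun i _ => pow_pos (zero_lt_one.trans_le (one_le_max_one_cast (x i))) _

lemma monN_add (y z : Fin d → ℕ) : monN x (y + z) = monN x y * monN x z := by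
  simp only [monN, Pi.add_apply, pow_add, prod_mul_distrib]

lemma monN_single (i : Fin d) (k : ℕ) :
    monN x (Pi.single i k) = ((max (x i) 1 : ℕ) : ℝ) ^ k := by
  rw [monN, prod_eq_single i (fun j _ hj => by simp [hj]) (by simp)]
  simp

lemma monN_le_pow_sum {B : ℝ} (hB : ∀ k, ((max (x k) 1 : ℕ) : ℝ) ≤ B) (z : Fin d → ℕ) :
    monN x z ≤ B ^ ∑ k, z k := by
  rw [← prod_pow_eq_pow_sum]
  exact prod_le_prod (fun k _ => by positivity) fun k _ => pow_le_pow_left₀ (by positivity) (hB k) _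

lemma monN_le_mul_of_sum_le_two {y : Fin d → ℕ} (hy : ∑ k, y k ≤ 2) {i : Fin d} (hi : y i ≠ 0)
    {B : ℝ} (hB : ∀ k, ((max (x k) 1 : ℕ) : ℝ) ≤ B) :
    monN x y ≤ ((max (x i) 1 : ℕ) : ℝ) * B := by
  have hle : Pi.single i 1 ≤ y := fun k => by
    rcases eq_or_ne k i with rfl | hk
    · simpa using Nat.one_le_iff_ne_zero.2 hi
    · simp [hk]
  obtain ⟨z, rfl⟩ := exists_add_of_le hle
  have hz : ∑ k, z k ≤ 1 := by
    simp only [Pi.add_apply, sum_add_distrib, sum_pi_single', mem_univ, if_true] at hy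
    omega
  rw [monN_add, monN_single, pow_one]
  gcongr
  calc monN x z ≤ B ^ ∑ k, z k := monN_le_pow_sum x hB z
    _ ≤ B ^ 1 := pow_le_pow_right₀ ((one_le_max_one_cast (x i)).trans (hB i)) hz
    _ = B := pow_one B

end Monomial

namespace Tier1

variable {d : ℕ} {C : Finset (Fin d → ℕ)} {x : ℕ → Fin d → ℕ} {y : Fin d → ℕ}

lemma isBigO (htier : Tier1 C x y) {y' : Fin d → ℕ} (hy' : y' ∈ C) :
    (fun n => monN (x n) y') =O[atTop] fun n => monN (x n) y := by
  obtain ⟨L, hL, hT⟩ := htier y' hy'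
  obtain ⟨ε, -, hε, hεL⟩ := ENNReal.lt_iff_exists_real_btwn.1 hL
  refine IsBigO.of_bound ε⁻¹ ((hT.eventually (eventually_gt_nhds hεL)).mono fun n hn => ?_)
  have hlt : ε < monN (x n) y / monN (x n) y' := (ENNReal.ofReal_lt_ofReal_iff'.1 hn).1
  rw [norm_of_nonneg (monN_pos _ _).le, norm_of_nonneg (monN_pos _ _).le,
    le_inv_mul_iff₀ (ENNReal.ofReal_pos.1 hε)]
  exact ((lt_div_iff₀ (monN_pos _ _)).1 hlt).le

theorem tendsto_atTop (htier : Tier1 C x y)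
    (hfull : ∀ i : Fin d, (fun j => if j = i then 2 else 0 : Fin d → ℕ) ∈ C)
    (hy : ∑ k, y k ≤ 2) {j : Fin d} (hj : Tendsto (fun n => x n j) atTop atTop)
    {i : Fin d} (hi : y i ≠ 0) :
    Tendsto (fun n => x n i) atTop atTop := by
  set m : ℕ → Fin d → ℝ := fun n k => ((max (x n k) 1 : ℕ) : ℝ)
  have hsq : (fun n => ∑ k, m n k ^ 2) =O[atTop] fun n => monN (x n) y := by
    refine IsBigO.congr_left (IsBigO.sum (s := univ) fun k _ => htier.isBigO (hfull k)) fun n => ?_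
    have hk : ∀ k, (fun j => if j = k then 2 else 0 : Fin d → ℕ) = Pi.single k 2 := fun k => by
      ext j; simp [Pi.single_apply]
    simp only [Finset.sum_apply, hk, monN_single, m]
  obtain ⟨c, hc, hcsq⟩ := hsq.exists_pos
  have hmj : Tendsto (fun n => m n j) atTop atTop :=
    tendsto_atTop_mono (fun n => Nat.cast_le.2 (le_max_left _ _))
      (tendsto_natCast_atTop_atTop.comp hj)
  have hji : ∀ᶠ n in atTop, m n j ≤ c * m n i := by
    filter_upwards [hcsq.bound] with n hn
    obtain ⟨K, -, hK⟩ := exists_max_image univ (m n) ⟨j, mem_univ j⟩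
    have hKpos : 0 < m n K := zero_lt_one.trans_le (one_le_max_one_cast _)
    have hmon := monN_le_mul_of_sum_le_two (x n) hy hi fun k => hK k (mem_univ k)
    rw [norm_of_nonneg (by positivity), norm_of_nonneg (monN_pos _ _).le] at hn
    have hKi : m n K * m n K ≤ c * m n i * m n K := calc
      m n K * m n K = m n K ^ 2 := (sq _).symm
      _ ≤ ∑ k, m n k ^ 2 := single_le_sum (fun k _ => sq_nonneg (m n k)) (mem_univ K)
      _ ≤ c * monN (x n) y := hn
      _ ≤ c * (m n i * m n K) := by gcongr
      _ = c * m n i * m n K := by ring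
    exact (hK j (mem_univ j)).trans (le_of_mul_le_mul_right hKi hKpos)
  have hmi : Tendsto (fun n => m n i) atTop atTop :=
    tendsto_atTop_mono' atTop (hji.mono fun n hn => (div_le_iff₀' hc).2 hn)
      (hmj.atTop_div_const hc)
  refine tendsto_natCast_atTop_iff.1 (tendsto_atTop_mono (fun n => ?_)
    (tendsto_atTop_add_const_right atTop (-1) hmi))
  have : max (x n i) 1 ≤ x n i + 1 := max_le (Nat.le_succ _) (Nat.le_add_left 1 _)
  have : m n i ≤ x n i + 1 := by simp only [m]; exact_mod_cast this
  linarith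

end Tier1

theorem tier_one_source_intensity_pos_general (d : ℕ) (C : Finset (Fin d → ℕ))
    (hbinary : ∀ y ∈ C, ∑ j, y j ≤ 2)
    (hfull : ∀ i : Fin d, (fun j => if j = i then 2 else 0 : Fin d → ℕ) ∈ C)
    (x : ℕ → Fin d → ℕ)
    (hinf : ∃ j, Tendsto (fun n => x n j) atTop atTop)
    (y : Fin d → ℕ) (hy : y ∈ C)
    (htier : Tier1 C x y)
    (κ : ℝ) (hκ : 0 < κ) :
    ∀ᶠ n in atTop, 0 < κ * ∏ j, ((x n j).descFactorial (y j) : ℝ) := by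
  obtain ⟨j, hj⟩ := hinf
  have hge : ∀ᶠ n in atTop, ∀ i, y i ≤ x n i := eventually_all.2 fun i => by
    rcases eq_or_ne (y i) 0 with h0 | hi
    · simp [h0]
    · exact (htier.tendsto_atTop hfull (hbinary y hy) hj hi).eventually_ge_atTop (y i)
  filter_upwards [hge] with n hn
  exact mul_pos hκ (prod_pos fun i _ => Nat.cast_pos.2 (Nat.descFactorial_pos.2 (hn i)))

/-- part (i) of Lemma 8 of the paper: for a binary double-full network
and a D-type tier sequence, any reaction whose source complex `y` is in tier 1 has
strictly positive mass-action intensity along the sequence for all large `n`. -/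
theorem tier_one_source_intensity_pos (d : ℕ) (hd : 1 ≤ d) (C : Finset (Fin d → ℕ))
    (hbinary : ∀ y ∈ C, ∑ j, y j ≤ 2)
    (hfull : ∀ i : Fin d, (fun j => if j = i then 2 else 0 : Fin d → ℕ) ∈ C)
    (x : ℕ → Fin d → ℕ)
    (hLim : ∀ j, ∃ L : ℝ≥0∞, Tendsto (fun n => ((x n j : ℕ) : ℝ≥0∞)) atTop (𝓝 L))
    (hinf : ∃ j, Tendsto (fun n => x n j) atTop atTop)
    (hRatio : ∀ y ∈ C, ∀ y' ∈ C, ∃ L : ℝ≥0∞,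
      Tendsto (fun n => ENNReal.ofReal (monN (x n) y / monN (x n) y')) atTop (𝓝 L))
    (y y' : Fin d → ℕ) (hy : y ∈ C) (hy' : y' ∈ C)
    (htier : Tier1 C x y)
    (κ : ℝ) (hκ : 0 < κ) :
    ∀ᶠ n in atTop, 0 < κ * ∏ j, ((x n j).descFactorial (y j) : ℝ) :=
  tier_one_source_intensity_pos_general d C hbinary hfull x hinf y hy htier κ hκ
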